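/- Let K be a finite simplicial complex with an acyclic partial matching μ : M → M. For each q ≥ 0, let Crit_q(K, μ) be the subspace of C_q(K) spanned by {φ_q(γ) : γ ∈ R_q(μ)} and Match_q(K, μ) the subspace spanned by M_q^↑ ∪ {∂β : β ∈ M_{q+1}^↑}. Then both Crit_*(K, μ) and Match_*(K, μ) are chain subcomplexes of C_*(K) (each is closed under the boundary operator ∂), and C_q(K) = Crit_q(K, μ) ⊕ Match_q(K, μ) for every q ≥ 0. -/

import Mathlib

set_option maxSynthPendingDepth 2

/-! Simplicial ℤ/2 chains and homology machinery. -/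

/-- Chains with `ℤ/2` coefficients, formal sums of finite subsets of `V`. -/
abbrev Ch (V : Type*) := Finset V →₀ ZMod 2

/-- The simplicial boundary operator: a simplex with at least two vertices is sent
to the sum of its codimension-1 faces; vertices are sent to `0`. -/
noncomputable def bdry (V : Type*) [DecidableEq V] : Ch V →ₗ[ZMod 2] Ch V :=
  Finsupp.linearCombination (ZMod 2) fun σ : Finset V =>
    if σ.card ≤ 1 then 0 else ∑ v ∈ σ, Finsupp.single (σ.erase v) (1 : ZMod 2)

/-- A simplicial complex: a collection of nonempty finite subsets of `V`
closed under taking nonempty subsets. -/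
def IsComplex {V : Type*} (K : Set (Finset V)) : Prop :=
  ∀ σ ∈ K, σ.Nonempty ∧ ∀ τ ⊆ σ, τ.Nonempty → τ ∈ K

/-- The space of chains supported on simplices of `K` with `k` vertices
(i.e. the simplicial chain group of degree `k - 1`). -/
noncomputable def chainCard {V : Type*} [DecidableEq V] (K : Set (Finset V)) (k : ℕ) :
    Submodule (ZMod 2) (Ch V) :=
  Submodule.span (ZMod 2) {f | ∃ σ ∈ K, σ.card = k ∧ f = Finsupp.single σ 1}

theorem chainCard_mono {V : Type*} [DecidableEq V] {K₁ K₂ : Set (Finset V)}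
    (h : K₁ ⊆ K₂) (k : ℕ) : chainCard K₁ k ≤ chainCard K₂ k := by
  apply Submodule.span_mono
  rintro f ⟨σ, hσ, hc, rfl⟩
  exact ⟨σ, h hσ, hc, rfl⟩

/-- Cycles (in cardinality grading `k`, i.e. degree `k-1`) of a chain subcomplex `W`. -/
noncomputable def cyclesOf {V : Type*} [DecidableEq V] (W : ℕ → Submodule (ZMod 2) (Ch V)) (k : ℕ) :
    Submodule (ZMod 2) (Ch V) :=
  W k ⊓ LinearMap.ker (bdry V)

/-- Boundaries (in cardinality grading `k`, i.e. degree `k-1`) of a chain subcomplex `W`. -/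
noncomputable def bdriesOf {V : Type*} [DecidableEq V] (W : ℕ → Submodule (ZMod 2) (Ch V)) (k : ℕ) :
    Submodule (ZMod 2) (Ch V) :=
  Submodule.map (bdry V) (W (k + 1))

/-- Homology of the chain complex `W` in cardinality grading `k` (degree `k - 1`):
cycles modulo boundaries. -/
abbrev homolOf {V : Type*} [DecidableEq V] (W : ℕ → Submodule (ZMod 2) (Ch V)) (k : ℕ) :=
  ↥(cyclesOf W k) ⧸ (bdriesOf W k).comap (cyclesOf W k).subtype

/-- The map on homology induced by a degreewise inclusion of chain complexes. -/
noncomputable def homolMap {V : Type*} [DecidableEq V]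
    (W W' : ℕ → Submodule (ZMod 2) (Ch V)) (h : ∀ k, W k ≤ W' k) (k : ℕ) :
    homolOf W k →ₗ[ZMod 2] homolOf W' k :=
  Submodule.mapQ _ _ (Submodule.inclusion (inf_le_inf (h k) le_rfl))
    (by
      intro x hx
      simp only [Submodule.mem_comap, Submodule.subtype_apply, Submodule.coe_inclusion]
        at hx ⊢
      exact Submodule.map_mono (h (k + 1)) hx)

/-! Discrete Morse theory: partial matchings, acyclicity, the closure map. -/

/-- `Covers σ τ`: `σ` covers `τ` in the face poset, i.e. `τ ⊆ σ` in codimension one. -/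
def Covers {V : Type*} (σ τ : Finset V) : Prop :=
  τ ⊆ σ ∧ σ.card = τ.card + 1

/-- A partial matching: an involution `μ` on a set `M` of simplices matching each
simplex with a simplex that covers it or that it covers. -/
structure PartialMatching (V : Type*) where
  M : Set (Finset V)
  μ : Finset V → Finset V
  mem_M : ∀ σ ∈ M, μ σ ∈ M
  invol : ∀ σ ∈ M, μ (μ σ) = σ
  matched : ∀ σ ∈ M, Covers (μ σ) σ ∨ Covers σ (μ σ)

/-- Acyclicity of a partial matching: there is no cyclic sequence
`σ₁ ≻ μ(σ₁) ≺ σ₂ ≻ μ(σ₂) ≺ ⋯ ≺ σ_l ≻ μ(σ_l) ≺ σ₁` with `l ≥ 2` and the `σᵢ` distinct. -/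
def PartialMatching.Acyclic {V : Type*} (m : PartialMatching V) : Prop :=
  ¬ ∃ (l : ℕ) (f : ℕ → Finset V), 2 ≤ l ∧
      (∀ i < l, ∀ j < l, f i = f j → i = j) ∧
      (∀ i < l, f i ∈ m.M ∧ Covers (f i) (m.μ (f i))) ∧
      (∀ i < l, Covers (f ((i + 1) % l)) (m.μ (f i)))

/-- `M^↑`: matched simplices lying above their partner. -/
def Mup {V : Type*} (m : PartialMatching V) : Set (Finset V) :=
  {σ | σ ∈ m.M ∧ Covers σ (m.μ σ)}

/-- `M_q^↑` in cardinality grading: elements of `M^↑` with `k` vertices (degree `k-1`). -/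
def MupCard {V : Type*} (m : PartialMatching V) (k : ℕ) : Set (Finset V) :=
  {σ | σ ∈ Mup m ∧ σ.card = k}

/-- `R_q(μ)` in cardinality grading: the unmatched (critical) simplices of `K`
with `k` vertices (degree `k-1`). -/
def Rcard {V : Type*} (K : Set (Finset V)) (m : PartialMatching V) (k : ℕ) :
    Set (Finset V) :=
  {σ | σ ∈ K ∧ σ.card = k ∧ σ ∉ m.M}

/-- `(α, β)` is an edge of the graph `G(μ)`: `μ β` is defined, `β` lies above its
partner, and `α` covers `μ β` (with `β ≠ α`). -/
def IsEdge {V : Type*} (m : PartialMatching V) (α β : Finset V) : Prop :=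
  β ≠ α ∧ β ∈ m.M ∧ Covers β (m.μ β) ∧ Covers α (m.μ β)

open scoped Classical in
/-- `φ` is the closure map of the matching `m` on `K`: it satisfies the defining
recursion `φ α = α + ∑ φ β` over the edges `(α, β)` emanating from `α` in `G(μ)`. -/
def IsClosure {V : Type*} [Fintype V] [DecidableEq V] (K : Set (Finset V))
    (m : PartialMatching V) (φ : Finset V → Ch V) : Prop :=
  ∀ α ∈ K, φ α = Finsupp.single α 1 + ∑ β : Finset V, if IsEdge m α β then φ β else 0

/-- The degree-`(k-1)` chain group of the Morse (critical) complex of `C`: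
the span of the closures of the unmatched simplices of `C` with `k` vertices. -/
noncomputable def critWOn {V : Type*} [DecidableEq V] (C : Set (Finset V))
    (m : PartialMatching V) (φ : Finset V → Ch V) (k : ℕ) :
    Submodule (ZMod 2) (Ch V) :=
  Submodule.span (ZMod 2) {f | ∃ γ, γ ∈ C ∧ γ.card = k ∧ γ ∉ m.M ∧ f = φ γ}

theorem critWOn_mono {V : Type*} [DecidableEq V] {C₁ C₂ : Set (Finset V)}
    (h : C₁ ⊆ C₂) (m : PartialMatching V) (φ : Finset V → Ch V) (k : ℕ) :
    critWOn C₁ m φ k ≤ critWOn C₂ m φ k := by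
  apply Submodule.span_mono
  rintro f ⟨γ, hγ, hc, hm, rfl⟩
  exact ⟨γ, h hγ, hc, hm, rfl⟩

/-- The degree-`(k-1)` chain group of the complex `Match`, spanned by `M_{k-1}^↑`
together with the boundaries of the elements of `M_k^↑`. -/
noncomputable def matchW {V : Type*} [DecidableEq V] (m : PartialMatching V) (k : ℕ) :
    Submodule (ZMod 2) (Ch V) :=
  Submodule.span (ZMod 2)
    ({f | ∃ σ ∈ MupCard m k, f = Finsupp.single σ 1} ∪
      {f | ∃ β ∈ MupCard m (k + 1), f = bdry V (Finsupp.single β 1)})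

/-- The set `B_q^R ∪ B_q^↑ ∪ B_q^↓` (in cardinality grading `k = q + 1`). -/
noncomputable def morseBasis {V : Type*} [DecidableEq V] (K : Set (Finset V))
    (m : PartialMatching V) (φ : Finset V → Ch V) (k : ℕ) : Set (Ch V) :=
  {f | ∃ γ ∈ Rcard K m k, f = φ γ} ∪
    ({f | ∃ σ ∈ MupCard m k, f = Finsupp.single σ 1} ∪
      {f | ∃ β ∈ MupCard m (k + 1), f = bdry V (Finsupp.single β 1)})

/-!
The closure `φ γ` of a critical simplex `γ` is `γ` plus a chain on `M^↑`, and its boundary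
vanishes on `M^↓`; both follow by induction along `G(μ)`, which is well founded because the
matching is acyclic. Conversely, a chain on `M^↑` whose boundary vanishes on `M^↓` is zero: if
`β` is a `G(μ)`-minimal simplex of its support, the coefficient of `μ β` in the boundary is that
of `β`. Hence `Crit_q` consists exactly of the `q`-chains of `K` that vanish on `M^↓` and whose
boundary vanishes on `M^↓`; this description is closed under `∂` and meets `Match_q` only in `0`.
Every simplex lies in `Crit_q + Match_q`: a critical `γ` as `φ γ` minus a chain on `M^↑`, and
`τ ∈ M^↓` as `∂ (μ τ)` minus the other faces of `μ τ`, which are covered by induction along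
`G(μ)`.
-/

theorem Covers.two_le_card {V : Type*} {σ τ : Finset V} (h : Covers σ τ) (hτ : τ.Nonempty) :
    2 ≤ σ.card := by
  have := hτ.card_pos
  rw [h.2]
  omega

theorem Finsupp.single_one_add_self {α : Type*} (a : α) :
    single a (1 : ZMod 2) + single a 1 = 0 := by
  rw [← single_add, show (1 + 1 : ZMod 2) = 0 from rfl, single_zero]

section Boundary

open Finsupp

variable {V : Type*} [DecidableEq V]

theorem covers_iff_exists_erase {σ τ : Finset V} : Covers σ τ ↔ ∃ v ∈ σ, σ.erase v = τ := by
  rw [← Finset.covBy_iff_exists_erase, Finset.covBy_iff_card_sdiff_eq_one, Covers]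
  refine and_congr_right fun hsub => ?_
  rw [Finset.card_sdiff_of_subset hsub]
  have := Finset.card_le_card hsub
  omega

theorem bdry_single_of_two_le {σ : Finset V} (hσ : 2 ≤ σ.card) :
    bdry V (single σ 1) = ∑ v ∈ σ, single (σ.erase v) 1 := by
  rw [bdry, linearCombination_single, one_smul, if_neg (by omega)]

theorem bdry_single_of_card_le_one {σ : Finset V} (hσ : σ.card ≤ 1) :
    bdry V (single σ 1) = 0 := by
  rw [bdry, linearCombination_single, one_smul, if_pos hσ]

open scoped Classical in
theorem bdry_single_apply (σ : Finset V) {τ : Finset V} (hτ : τ.Nonempty) :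
    bdry V (single σ 1) τ = if Covers σ τ then 1 else 0 := by
  by_cases hσ : σ.card ≤ 1
  · rw [bdry_single_of_card_le_one hσ, if_neg fun h => by have := h.two_le_card hτ; omega]
    rfl
  rw [bdry_single_of_two_le (by omega),
    ← Finset.sum_image (f := fun ρ => single ρ (1 : ZMod 2)) (Finset.erase_injOn σ),
    Finset.sum_apply']
  simp only [single_apply, Finset.sum_ite_eq', Finset.mem_image, covers_iff_exists_erase]

open scoped Classical in
theorem bdry_apply (x : Ch V) {τ : Finset V} (hτ : τ.Nonempty) :
    bdry V x τ = ∑ σ ∈ x.support, if Covers σ τ then x σ else 0 := by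
  conv_lhs => rw [← x.sum_single]
  rw [map_finsuppSum, Finsupp.sum, finsetSum_apply]
  refine Finset.sum_congr rfl fun σ _ => ?_
  rw [← smul_single_one, map_smul, Finsupp.smul_apply, bdry_single_apply _ hτ, smul_eq_mul,
    mul_ite, mul_one, mul_zero]

theorem bdry_bdry_single (σ : Finset V) : bdry V (bdry V (single σ 1)) = 0 := by
  rcases le_or_gt σ.card 1 with hσ | hσ
  · rw [bdry_single_of_card_le_one hσ, map_zero]
  rw [bdry_single_of_two_le hσ, map_sum]
  rcases (show σ.card = 2 ∨ 2 < σ.card by omega) with hσ | hσ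
  · refine Finset.sum_eq_zero fun v hv => bdry_single_of_card_le_one ?_
    rw [Finset.card_erase_of_mem hv]
    omega
  rw [Finset.sum_congr rfl fun v hv => bdry_single_of_two_le (by
    rw [Finset.card_erase_of_mem hv]; omega), Finset.sum_sigma']
  -- the faces `(σ - v) - w` and `(σ - w) - v` cancel in pairs
  refine Finset.sum_involution (fun p _ => ⟨p.2, p.1⟩) (fun p _ => ?_) (fun p hp _ h => ?_)
    (fun p hp => ?_) (fun _ _ => rfl)
  · rw [Finset.erase_right_comm]
    exact single_one_add_self _
  · rw [Finset.mem_sigma] at hp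
    exact Finset.ne_of_mem_erase hp.2 (congrArg Sigma.fst h)
  · rw [Finset.mem_sigma] at hp ⊢
    exact ⟨Finset.mem_of_mem_erase hp.2,
      Finset.mem_erase.2 ⟨(Finset.ne_of_mem_erase hp.2).symm, hp.1⟩⟩

theorem bdry_bdry (x : Ch V) : bdry V (bdry V x) = 0 := by
  induction x using Finsupp.induction_linear with
  | zero => rw [map_zero, map_zero]
  | add x y hx hy => rw [map_add, map_add, hx, hy, add_zero]
  | single σ c => rw [← smul_single_one, map_smul, map_smul, bdry_bdry_single, smul_zero]

theorem chainCard_eq_supported (K : Set (Finset V)) (k : ℕ) :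
    chainCard K k = supported (ZMod 2) (ZMod 2) {σ | σ ∈ K ∧ σ.card = k} := by
  rw [chainCard, supported_eq_span_single]
  congr 1
  ext f
  simp only [Set.mem_ofPred_eq, Set.mem_image, and_assoc, eq_comm]

theorem bdry_mem_supported {K : Set (Finset V)} (hK : IsComplex K) {k : ℕ} {x : Ch V}
    (hx : x ∈ supported (ZMod 2) (ZMod 2) {σ | σ ∈ K ∧ σ.card = k + 1}) :
    bdry V x ∈ supported (ZMod 2) (ZMod 2) {σ | σ ∈ K ∧ σ.card = k} := by
  rw [supported_eq_span_single] at hx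
  refine Submodule.span_induction ?_ (by simp) (fun _ _ _ _ h₁ h₂ => by
    rw [map_add]; exact add_mem h₁ h₂) (fun c _ _ h => by
    rw [map_smul]; exact Submodule.smul_mem _ c h) hx
  rintro _ ⟨σ, ⟨hσK, hσc⟩, rfl⟩
  by_cases hσ : σ.card ≤ 1
  · rw [bdry_single_of_card_le_one hσ]
    exact zero_mem _
  rw [bdry_single_of_two_le (by omega)]
  refine Submodule.sum_mem _ fun v hv => single_mem_supported _ _ ?_
  have hc : (σ.erase v).card = k := by rw [Finset.card_erase_of_mem hv]; omega
  exact ⟨(hK σ hσK).2 _ (σ.erase_subset v) (Finset.card_pos.1 (by omega)), hc⟩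

end Boundary

section Cycles

open Relation

variable {α : Type*} {r : α → α → Prop}

theorem Relation.TransGen.exists_walk {a b : α} (h : TransGen r a b) :
    ∃ n, 0 < n ∧ ∃ f : ℕ → α, f 0 = a ∧ f n = b ∧ ∀ i < n, r (f i) (f (i + 1)) := by
  induction h with
  | @single b hab => exact ⟨1, one_pos, fun i => if i = 0 then a else b, rfl, rfl, by simpa⟩
  | @tail b c _ hbc ih =>
    obtain ⟨n, hn, f, h0, hb, hf⟩ := ih
    refine ⟨n + 1, n.succ_pos, fun i => if i ≤ n then f i else c, by simpa, by simp, ?_⟩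
    intro i hi
    rcases Nat.lt_or_ge i n with hin | hin
    · simpa [hin.le, Nat.succ_le_of_lt hin] using hf i hin
    · obtain rfl : i = n := by omega
      simpa [hb] using hbc

theorem not_transGen_self_of_forall_not_cycle (hirr : ∀ a, ¬ r a a)
    (hcyc : ¬ ∃ (l : ℕ) (f : ℕ → α), 2 ≤ l ∧ (∀ i < l, ∀ j < l, f i = f j → i = j) ∧
      ∀ i < l, r (f i) (f ((i + 1) % l)))
    (a : α) : ¬ TransGen r a a := by
  intro h
  classical
  obtain ⟨n, hn, f, hf0, hfn, hf⟩ := h.exists_walk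
  have hwalk : ∃ n, 0 < n ∧ ∃ f : ℕ → α, f 0 = f n ∧ ∀ i < n, r (f i) (f (i + 1)) :=
    ⟨n, hn, f, hf0.trans hfn.symm, hf⟩
  obtain ⟨hl, g, hg0, hg⟩ := Nat.find_spec hwalk
  set l := Nat.find hwalk
  -- a shortest closed walk has no repeated vertex: a repetition would cut out a shorter one
  have hinj : ∀ i < l, ∀ j < l, g i = g j → i = j := by
    intro i hi j hj hij
    wlog hlt : i < j generalizing i j
    · rcases Nat.lt_or_ge j i with hji | hji
      · exact (this j hj i hi hij.symm hji).symm
      · omega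
    exact absurd ⟨by omega, fun k => g (i + k), by simpa [Nat.add_sub_cancel' hlt.le] using hij,
      fun k hk => hg (i + k) (by omega)⟩ (Nat.find_min hwalk (show j - i < l by omega))
  have hl2 : 2 ≤ l := by
    by_contra hl1
    obtain hl1 : l = 1 := by omega
    exact hirr (g 0) (by simpa [hg0, hl1] using hg 0 (by omega))
  refine hcyc ⟨l, g, hl2, hinj, fun i hi => ?_⟩
  rcases Nat.lt_or_ge (i + 1) l with hil | hil
  · rw [Nat.mod_eq_of_lt hil]
    exact hg i hi
  · have hil : i + 1 = l := by omega
    rw [hil, Nat.mod_self, hg0, ← hil]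
    exact hg i hi

theorem Finite.wellFounded_of_forall_not_transGen_self [Finite α]
    (h : ∀ a, ¬ TransGen r a a) : WellFounded r :=
  have : Std.Irrefl (TransGen r) := ⟨h⟩
  Subrelation.wf TransGen.single (Finite.wellFounded_of_trans_of_irrefl (TransGen r))

end Cycles

def Mdown {V : Type*} (m : PartialMatching V) : Set (Finset V) :=
  {τ | τ ∈ m.M ∧ Covers (m.μ τ) τ}

namespace PartialMatching

variable {V : Type*} (m : PartialMatching V) {σ τ : Finset V}

theorem mem_mup_or_mem_mdown (hσ : σ ∈ m.M) : σ ∈ Mup m ∨ σ ∈ Mdown m :=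
  (m.matched σ hσ).symm.imp (⟨hσ, ·⟩) (⟨hσ, ·⟩)

theorem notMem_mdown_of_mem_mup (hσ : σ ∈ Mup m) : σ ∉ Mdown m := fun h => by
  have := hσ.2.2
  have := h.2.2
  omega

theorem mu_mem_mdown (hσ : σ ∈ Mup m) : m.μ σ ∈ Mdown m :=
  ⟨m.mem_M σ hσ.1, by rw [m.invol σ hσ.1]; exact hσ.2⟩

theorem mu_mem_mup (hτ : τ ∈ Mdown m) : m.μ τ ∈ Mup m :=
  ⟨m.mem_M τ hτ.1, by rw [m.invol τ hτ.1]; exact hτ.2⟩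

theorem isEdge_mu_iff (hτ : τ ∈ Mdown m) : IsEdge m σ (m.μ τ) ↔ m.μ τ ≠ σ ∧ Covers σ τ := by
  have hup := m.mu_mem_mup hτ
  rw [IsEdge, m.invol τ hτ.1]
  exact ⟨fun h => ⟨h.1, h.2.2.2⟩,
    fun h => ⟨h.1, hup.1, by simpa [m.invol τ hτ.1] using hup.2, h.2⟩⟩

variable {m}

theorem Acyclic.not_transGen_self (hac : m.Acyclic) (σ : Finset V) :
    ¬ Relation.TransGen (flip (IsEdge m)) σ σ := by
  refine not_transGen_self_of_forall_not_cycle (fun σ h => h.1 rfl) ?_ σ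
  rintro ⟨l, f, hl, hinj, hf⟩
  exact hac ⟨l, f, hl, hinj, fun i hi => ⟨(hf i hi).2.1, (hf i hi).2.2.1⟩,
    fun i hi => (hf i hi).2.2.2⟩

theorem Acyclic.wellFounded_isEdge_flip [Finite V] (hac : m.Acyclic) :
    WellFounded (flip (IsEdge m)) :=
  Finite.wellFounded_of_forall_not_transGen_self hac.not_transGen_self

theorem Acyclic.wellFounded_isEdge [Finite V] (hac : m.Acyclic) : WellFounded (IsEdge m) :=
  Finite.wellFounded_of_forall_not_transGen_self fun σ h =>
    hac.not_transGen_self σ (Relation.transGen_swap.2 h)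

end PartialMatching

section MatchComplex

open Finsupp

variable {V : Type*} [DecidableEq V]

theorem matchW_eq (m : PartialMatching V) (k : ℕ) :
    matchW m k = supported (ZMod 2) (ZMod 2) (MupCard m k) ⊔
      (supported (ZMod 2) (ZMod 2) (MupCard m (k + 1))).map (bdry V) := by
  rw [matchW, Submodule.span_union, supported_eq_span_single, supported_eq_span_single,
    Submodule.map_span, Set.image_image]
  congr 2 <;> ext f <;> simp only [Set.mem_ofPred_eq, Set.mem_image, eq_comm]

theorem bdry_matchW_le (m : PartialMatching V) (k : ℕ) :
    (matchW m (k + 1)).map (bdry V) ≤ matchW m k := by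
  rw [matchW, Submodule.map_span, Submodule.span_le]
  rintro _ ⟨_, ⟨σ, hσ, rfl⟩ | ⟨β, -, rfl⟩, rfl⟩
  · exact Submodule.subset_span (Or.inr ⟨σ, hσ, rfl⟩)
  · rw [SetLike.mem_coe, bdry_bdry]
    exact zero_mem _

end MatchComplex

section MorseComplex

open Finsupp PartialMatching

variable {V : Type*} [Fintype V] [DecidableEq V] {K : Set (Finset V)} {m : PartialMatching V}
  {φ : Finset V → Ch V}

theorem phi_sub_single_mem_supported (hMK : m.M ⊆ K) (hac : m.Acyclic)
    (hφ : IsClosure K m φ) {α : Finset V} (hα : α ∈ K) :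
    φ α - single α 1 ∈ supported (ZMod 2) (ZMod 2) (MupCard m α.card) := by
  induction α using hac.wellFounded_isEdge_flip.induction with
  | _ α ih =>
  classical
  rw [hφ α hα, add_sub_cancel_left]
  refine Submodule.sum_mem _ fun β _ => ?_
  split_ifs with hβ
  · have hc : β.card = α.card := by have := hβ.2.2.1.2; have := hβ.2.2.2.2; omega
    rw [← sub_add_cancel (φ β) (single β 1)]
    exact add_mem (hc ▸ ih β hβ (hMK hβ.2.1))
      (single_mem_supported _ _ ⟨⟨hβ.2.1, hβ.2.2.1⟩, hc⟩)
  · exact zero_mem _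

theorem bdry_phi_apply (hK : IsComplex K) (hMK : m.M ⊆ K) (hac : m.Acyclic)
    (hφ : IsClosure K m φ) {τ : Finset V} (hτ : τ ∈ Mdown m) {α : Finset V} (hα : α ∈ K) :
    bdry V (φ α) τ = if m.μ τ = α then 1 else 0 := by
  induction α using hac.wellFounded_isEdge_flip.induction with
  | _ α ih =>
  classical
  have hτne : τ.Nonempty := (hK τ (hMK hτ.1)).1
  rw [hφ α hα, map_add, map_sum, Finsupp.add_apply, finsetSum_apply, bdry_single_apply _ hτne,
    Finset.sum_eq_single (m.μ τ) (fun β _ hβ => ?_) (by simp)]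
  · by_cases hα' : m.μ τ = α
    · have hedge : ¬ IsEdge m α (m.μ τ) := fun h => h.1 hα'
      rw [if_pos (hα' ▸ hτ.2), if_neg hedge, map_zero, Finsupp.zero_apply, if_pos hα']
      rfl
    · by_cases hcov : Covers α τ
      · have hedge := (m.isEdge_mu_iff hτ).2 ⟨hα', hcov⟩
        rw [if_pos hcov, if_pos hedge, ih _ hedge (hMK hedge.2.1), if_pos rfl, if_neg hα']
        rfl
      · have hedge : ¬ IsEdge m α (m.μ τ) := fun h => hcov ((m.isEdge_mu_iff hτ).1 h).2
        rw [if_neg hcov, if_neg hedge, map_zero, Finsupp.zero_apply, if_neg hα']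
        rfl
  · split_ifs with hedge
    · rw [ih β hedge (hMK hedge.2.1), if_neg (Ne.symm hβ)]
    · rw [map_zero, Finsupp.zero_apply]

theorem phi_mem_supported (hMK : m.M ⊆ K) (hac : m.Acyclic) (hφ : IsClosure K m φ)
    {γ : Finset V} (hγ : γ ∈ K) (hγM : γ ∉ m.M) :
    φ γ ∈ supported (ZMod 2) (ZMod 2) ({σ | σ ∈ K ∧ σ.card = γ.card} \ Mdown m) := by
  rw [← sub_add_cancel (φ γ) (single γ 1)]
  refine add_mem (supported_mono (fun σ hσ => ?_) (phi_sub_single_mem_supported hMK hac hφ hγ))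
    (single_mem_supported _ _ ⟨⟨hγ, rfl⟩, fun h => hγM h.1⟩)
  exact ⟨⟨hMK hσ.1.1, hσ.2⟩, m.notMem_mdown_of_mem_mup hσ.1⟩

theorem eq_zero_of_mem_supported_mup (hK : IsComplex K) (hMK : m.M ⊆ K) (hac : m.Acyclic)
    {y : Ch V} (hy : y ∈ supported (ZMod 2) (ZMod 2) (Mup m))
    (hby : bdry V y ∈ supported (ZMod 2) (ZMod 2) (Mdown m)ᶜ) : y = 0 := by
  classical
  by_contra hne
  obtain ⟨β, hβ, hmin⟩ := hac.wellFounded_isEdge.has_min (y.support : Set (Finset V))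
    (by simpa [Finset.coe_nonempty, support_nonempty_iff] using hne)
  have hβup : β ∈ Mup m := hy hβ
  have hτ := m.mu_mem_mdown hβup
  -- by minimality, `β` is the only simplex of the support of `y` that covers `μ β`
  have hval : bdry V y (m.μ β) = y β := by
    rw [bdry_apply y (hK _ (hMK hτ.1)).1, Finset.sum_eq_single β (fun σ hσ hσβ => if_neg
      fun hcov => hmin σ hσ ⟨Ne.symm hσβ, hβup.1, hβup.2, hcov⟩) (fun h => (h hβ).elim),
      if_pos hβup.2]
  exact mem_support_iff.1 hβ (hval ▸ (mem_supported' (ZMod 2) _).1 hby (m.μ β) (not_not.2 hτ))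

theorem critWOn_le (hK : IsComplex K) (hMK : m.M ⊆ K) (hac : m.Acyclic)
    (hφ : IsClosure K m φ) (k : ℕ) :
    critWOn K m φ k ≤ supported (ZMod 2) (ZMod 2) ({σ | σ ∈ K ∧ σ.card = k} \ Mdown m) ⊓
      (supported (ZMod 2) (ZMod 2) (Mdown m)ᶜ).comap (bdry V) := by
  refine Submodule.span_le.2 ?_
  rintro _ ⟨γ, hγ, rfl, hγM, rfl⟩
  refine ⟨phi_mem_supported hMK hac hφ hγ hγM, (mem_supported' (ZMod 2) _).2 fun τ hτ => ?_⟩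
  rw [Set.notMem_compl_iff] at hτ
  rw [bdry_phi_apply hK hMK hac hφ hτ hγ, if_neg fun h : m.μ τ = γ => hγM (h ▸ m.mem_M τ hτ.1)]

theorem critWOn_eq (hK : IsComplex K) (hMK : m.M ⊆ K) (hac : m.Acyclic)
    (hφ : IsClosure K m φ) (k : ℕ) :
    critWOn K m φ k = supported (ZMod 2) (ZMod 2) ({σ | σ ∈ K ∧ σ.card = k} \ Mdown m) ⊓
      (supported (ZMod 2) (ZMod 2) (Mdown m)ᶜ).comap (bdry V) := by
  refine le_antisymm (critWOn_le hK hMK hac hφ k) ?_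
  rintro x ⟨hx, hbx⟩
  classical
  have hxs := (mem_supported (ZMod 2) x).1 hx
  set c := x.filter (· ∉ m.M)
  set w := c.sum fun δ a => a • φ δ
  have hw : w ∈ critWOn K m φ k := Submodule.sum_mem _ fun δ hδ => by
    rw [support_filter, Finset.mem_filter] at hδ
    obtain ⟨⟨hδK, hδc⟩, -⟩ := hxs hδ.1
    exact Submodule.smul_mem _ _ (Submodule.subset_span ⟨δ, hδK, hδc, hδ.2, rfl⟩)
  -- `w` has the same coefficients as `x` off `M`, so `x - w` lives on `M^↑`
  have hxw : x - w ∈ supported (ZMod 2) (ZMod 2) (Mup m) := by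
    have hsplit : x - w = x.filter (· ∈ m.M) - c.sum fun δ a => a • (φ δ - single δ 1) := by
      simp only [smul_sub, sum_sub, smul_single_one, sum_single]
      conv_lhs => rw [← filter_add_filter_not x (· ∈ m.M)]
      abel
    rw [hsplit]
    refine sub_mem ((mem_supported' (ZMod 2) _).2 fun δ hδ => ?_)
      (Submodule.sum_mem _ fun δ hδ => ?_)
    · rw [filter_apply]
      split_ifs with hδM
      · exact (mem_supported' (ZMod 2) x).1 hx δ
          fun h => h.2 ((m.mem_mup_or_mem_mdown hδM).resolve_left hδ)
      · rfl
    · rw [support_filter, Finset.mem_filter] at hδ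
      exact Submodule.smul_mem _ _ (supported_mono (fun σ hσ => hσ.1)
        (phi_sub_single_mem_supported hMK hac hφ (hxs hδ.1).1.1))
  have hxw0 := eq_zero_of_mem_supported_mup hK hMK hac hxw
    (by rw [map_sub]; exact sub_mem hbx (critWOn_le hK hMK hac hφ k hw).2)
  rwa [sub_eq_zero.1 hxw0]

theorem bdry_critWOn_le (hK : IsComplex K) (hMK : m.M ⊆ K) (hac : m.Acyclic)
    (hφ : IsClosure K m φ) (k : ℕ) :
    (critWOn K m φ (k + 1)).map (bdry V) ≤ critWOn K m φ k := by
  rw [critWOn_eq hK hMK hac hφ k]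
  rintro _ ⟨x, hx, rfl⟩
  obtain ⟨hx, hbx⟩ := critWOn_le hK hMK hac hφ (k + 1) hx
  have hbx' := bdry_mem_supported hK (supported_mono Set.sdiff_subset hx)
  refine ⟨(mem_supported' (ZMod 2) _).2 fun τ hτ => ?_, ?_⟩
  · rw [Set.mem_sdiff, not_and_or, not_not] at hτ
    exact hτ.elim ((mem_supported' (ZMod 2) _).1 hbx' τ)
      ((mem_supported' (ZMod 2) _).1 hbx τ ∘ not_not.2)
  · rw [SetLike.mem_coe, Submodule.mem_comap, bdry_bdry]
    exact zero_mem _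

theorem critWOn_inf_matchW (hK : IsComplex K) (hMK : m.M ⊆ K) (hac : m.Acyclic)
    (hφ : IsClosure K m φ) (k : ℕ) : critWOn K m φ k ⊓ matchW m k = ⊥ := by
  rw [eq_bot_iff]
  rintro x ⟨hxc, hxm⟩
  obtain ⟨hx, hbx⟩ := critWOn_le hK hMK hac hφ k hxc
  rw [matchW_eq] at hxm
  obtain ⟨u, hu, _, ⟨y, hy, rfl⟩, rfl⟩ := Submodule.mem_sup.1 hxm
  have hu' : u ∈ supported (ZMod 2) (ZMod 2) (Mup m) := supported_mono (fun σ h => h.1) hu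
  have hy0 : y = 0 := by
    refine eq_zero_of_mem_supported_mup hK hMK hac (supported_mono (fun σ h => h.1) hy) ?_
    rw [← add_sub_cancel_left u (bdry V y)]
    exact sub_mem (supported_mono (fun σ h => h.2) hx)
      (supported_mono (fun σ h => m.notMem_mdown_of_mem_mup h) hu')
  rw [hy0, map_zero, add_zero] at hbx ⊢
  exact (Submodule.mem_bot _).2 (eq_zero_of_mem_supported_mup hK hMK hac hu' hbx)

theorem single_mem_critWOn_sup_matchW_of_notMem_mdown (hMK : m.M ⊆ K) (hac : m.Acyclic)
    (hφ : IsClosure K m φ) {σ : Finset V} (hσ : σ ∈ K) (hσd : σ ∉ Mdown m) :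
    single σ 1 ∈ critWOn K m φ σ.card ⊔ matchW m σ.card := by
  by_cases hσM : σ ∈ m.M
  · have hσup := (m.mem_mup_or_mem_mdown hσM).resolve_right hσd
    exact Submodule.mem_sup_right (Submodule.subset_span (Or.inl ⟨σ, ⟨hσup, rfl⟩, rfl⟩))
  · rw [← sub_sub_cancel (φ σ) (single σ 1), matchW_eq]
    exact sub_mem (Submodule.mem_sup_left (Submodule.subset_span ⟨σ, hσ, rfl, hσM, rfl⟩))
      (Submodule.mem_sup_right (Submodule.mem_sup_left
        (phi_sub_single_mem_supported hMK hac hφ hσ)))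

theorem single_mem_critWOn_sup_matchW (hK : IsComplex K) (hMK : m.M ⊆ K) (hac : m.Acyclic)
    (hφ : IsClosure K m φ) {σ : Finset V} (hσ : σ ∈ K) :
    single σ 1 ∈ critWOn K m φ σ.card ⊔ matchW m σ.card := by
  induction σ using (InvImage.wf m.μ hac.wellFounded_isEdge_flip).induction with
  | _ σ ih =>
  by_cases hσd : σ ∉ Mdown m
  · exact single_mem_critWOn_sup_matchW_of_notMem_mdown hMK hac hφ hσ hσd
  rw [not_not] at hσd
  have hσne : σ.Nonempty := (hK σ hσ).1
  set β := m.μ σ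
  have hβ := m.mu_mem_mup hσd
  obtain ⟨v₀, hv₀, hβσ⟩ := covers_iff_exists_erase.1 hσd.2
  have hsplit : single σ 1 = bdry V (single β 1) - ∑ v ∈ β.erase v₀, single (β.erase v) 1 := by
    rw [bdry_single_of_two_le (hσd.2.two_le_card hσne), ← Finset.add_sum_erase _ _ hv₀, hβσ,
      add_sub_cancel_right]
  rw [hsplit]
  refine sub_mem (Submodule.mem_sup_right (Submodule.subset_span
    (Or.inr ⟨β, ⟨hβ, by rw [hσd.2.2]⟩, rfl⟩))) (Submodule.sum_mem _ fun v hv => ?_)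
  have hvβ := Finset.mem_of_mem_erase hv
  have hρc : (β.erase v).card = σ.card := by
    rw [Finset.card_erase_of_mem hvβ, hσd.2.2, Nat.add_sub_cancel]
  have hρK : β.erase v ∈ K :=
    (hK β (hMK hβ.1)).2 _ (β.erase_subset v) (Finset.card_pos.1 (hρc ▸ hσne.card_pos))
  rw [← hρc]
  by_cases hρd : β.erase v ∈ Mdown m
  · refine ih _ ((m.isEdge_mu_iff hρd).2 ⟨fun h => ?_, ⟨β.erase_subset v, ?_⟩⟩) hρK
    · have hρσ : β.erase v = σ := by rw [← m.invol _ hρd.1, h, m.invol σ hσd.1]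
      exact Finset.ne_of_mem_erase hv (Finset.erase_injOn β hvβ hv₀ (hρσ.trans hβσ.symm))
    · exact (Finset.card_erase_add_one hvβ).symm
  · exact single_mem_critWOn_sup_matchW_of_notMem_mdown hMK hac hφ hρK hρd

theorem critWOn_sup_matchW (hK : IsComplex K) (hMK : m.M ⊆ K) (hac : m.Acyclic)
    (hφ : IsClosure K m φ) (k : ℕ) : critWOn K m φ k ⊔ matchW m k = chainCard K k := by
  rw [chainCard_eq_supported]
  refine le_antisymm (sup_le ?_ ?_) ?_
  · exact (critWOn_le hK hMK hac hφ k).trans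
      (inf_le_left.trans (supported_mono Set.sdiff_subset))
  · have hup : ∀ j, MupCard m j ⊆ {σ | σ ∈ K ∧ σ.card = j} := fun j σ hσ => ⟨hMK hσ.1.1, hσ.2⟩
    rw [matchW_eq]
    exact sup_le (supported_mono (hup k)) (Submodule.map_le_iff_le_comap.2 fun y hy =>
      bdry_mem_supported hK (supported_mono (hup (k + 1)) hy))
  · rw [supported_eq_span_single, Submodule.span_le]
    rintro _ ⟨σ, ⟨hσ, rfl⟩, rfl⟩
    exact single_mem_critWOn_sup_matchW hK hMK hac hφ hσ

end MorseComplex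

/-- For a finite simplicial complex `K` with an acyclic partial matching
`μ`, the graded subspaces `Crit_*(K, μ)` and `Match_*(K, μ)` are both closed under the
boundary operator, and `C_q(K) = Crit_q(K, μ) ⊕ Match_q(K, μ)` for every `q ≥ 0`. -/
theorem crit_match_decomposition {V : Type*} [Fintype V] [DecidableEq V]
    (K : Set (Finset V)) (hK : IsComplex K)
    (m : PartialMatching V) (hMK : m.M ⊆ K) (hac : m.Acyclic)
    (φ : Finset V → Ch V) (hφ : IsClosure K m φ) :
    (∀ k : ℕ, Submodule.map (bdry V) (critWOn K m φ (k + 1)) ≤ critWOn K m φ k) ∧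
    (∀ k : ℕ, Submodule.map (bdry V) (matchW m (k + 1)) ≤ matchW m k) ∧
    (∀ q : ℕ, critWOn K m φ (q + 1) ⊓ matchW m (q + 1) = ⊥ ∧
      critWOn K m φ (q + 1) ⊔ matchW m (q + 1) = chainCard K (q + 1)) :=
  ⟨bdry_critWOn_le hK hMK hac hφ, bdry_matchW_le m, fun q =>
    ⟨critWOn_inf_matchW hK hMK hac hφ (q + 1), critWOn_sup_matchW hK hMK hac hφ (q + 1)⟩⟩
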